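/- arXiv:2207.02855 — 2 statements merged into one kernel-verified Lean document; each statement's English description precedes it below -/
import Mathlib

section
/- Weak Boolean Nullstellensatz: Let I be a finitely generated ideal in the Boolean polynomial ring 𝔽₂[X₁,…,Xₙ]/⟨Xᵢ² − Xᵢ⟩. Then the variety V(I) = { x ∈ 𝔽₂ⁿ : f(x) = 0 for all f ∈ I } is empty if and only if 1 ∈ I. -/
set_option maxHeartbeats 1000000
set_option synthInstance.maxHeartbeats 400000


open MvPolynomial

theorem zmod2_sq : ∀ a : ZMod 2, a ^ 2 = a := by decide

theorem zmod2_eq_one : ∀ a : ZMod 2, a ≠ 0 → a = 1 := by decide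

section Aux

variable {n : ℕ}

local notation "J" => Ideal.span (Set.range fun i : Fin n => (X i : MvPolynomial (Fin n) (ZMod 2)) ^ 2 - X i)

theorem bool_eval_zero_of_mem {q : MvPolynomial (Fin n) (ZMod 2)} (hq : q ∈ J)
    (x : Fin n → ZMod 2) : eval x q = 0 := by
  have : J ≤ RingHom.ker (eval x) := by
    rw [Ideal.span_le]
    rintro _ ⟨i, rfl⟩
    simp only [SetLike.mem_coe, RingHom.mem_ker, map_sub, map_pow, eval_X]
    rw [zmod2_sq, sub_self]
  exact this hq

theorem bool_mem_of_eval_zero {p : MvPolynomial (Fin n) (ZMod 2)}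
    (hp : ∀ x : Fin n → ZMod 2, eval x p = 0) : p ∈ J := by
  classical
  set mk := Ideal.Quotient.mk (J) with hmk
  have hX : ∀ (i : Fin n) (k : ℕ), mk (X i) ^ (k + 1) = mk (X i) := by
    intro i k
    induction k with
    | zero => simp
    | succ k ih =>
      have h2 : mk (X i) ^ 2 = mk (X i) := by
        rw [← map_pow, ← sub_eq_zero, ← map_sub, Ideal.Quotient.eq_zero_iff_mem]
        exact Ideal.subset_span ⟨i, rfl⟩
      calc mk (X i) ^ (k + 2) = mk (X i) ^ (k + 1) * mk (X i) := by ring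
        _ = mk (X i) * mk (X i) := by rw [ih]
        _ = mk (X i) := by rw [← sq, h2]
  -- reduced polynomial
  set red : (Fin n →₀ ℕ) → (Fin n →₀ ℕ) := fun d => d.mapRange (min · 1) (by simp) with hred
  set p' : MvPolynomial (Fin n) (ZMod 2) :=
    ∑ d ∈ p.support, monomial (red d) (coeff d p) with hp'
  have hsupp : ∀ d : Fin n →₀ ℕ, (red d).support = d.support := by
    intro d
    ext i
    simp [hred, Finsupp.mem_support_iff, Nat.min_eq_zero_iff]
  have hmkeq : mk p = mk p' := by
    conv_lhs => rw [p.as_sum]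
    rw [hp', map_sum, map_sum]
    refine Finset.sum_congr rfl fun d _ => ?_
    rw [monomial_eq, monomial_eq, map_mul, map_mul]
    congr 1
    rw [Finsupp.prod, Finsupp.prod, hsupp, map_prod, map_prod]
    refine Finset.prod_congr rfl fun i hi => ?_
    rw [map_pow, map_pow]
    have h1 : d i ≠ 0 := Finsupp.mem_support_iff.mp hi
    have h2 : red d i = 1 := by
      simp only [hred, Finsupp.mapRange_apply]
      omega
    obtain ⟨k, hk⟩ := Nat.exists_eq_add_of_lt (Nat.pos_of_ne_zero h1)
    rw [h2, hk, pow_one]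
    rw [Nat.zero_add, hX]
  have hdeg : p' ∈ restrictDegree (Fin n) (ZMod 2) (Fintype.card (ZMod 2) - 1) := by
    refine Submodule.sum_mem _ fun d _ => ?_
    rw [mem_restrictDegree]
    intro s hs i
    rw [support_monomial] at hs
    by_cases h : coeff d p = 0
    · simp [h] at hs
    · simp only [if_neg h, Finset.mem_singleton] at hs
      subst hs
      have : Fintype.card (ZMod 2) = 2 := by decide
      simp only [hred, Finsupp.mapRange_apply, this]
      omega
  have heval : ∀ x : Fin n → ZMod 2, eval x p' = 0 := by
    intro x
    have hdiff : p' - p ∈ J := by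
      rw [← Ideal.Quotient.eq_zero_iff_mem, map_sub, hmkeq, sub_self]
    have := bool_eval_zero_of_mem hdiff x
    rw [map_sub, hp x, sub_zero] at this
    exact this
  have : p' = 0 := MvPolynomial.eq_zero_of_eval_eq_zero (Fin n) (ZMod 2) p' heval hdeg
  rw [← Ideal.Quotient.eq_zero_iff_mem, hmkeq, this, map_zero]

end Aux
theorem one_sub_prod_mem {R : Type*} [CommRing R] (I : Ideal R) {ι : Type*} (s : Finset ι)
    (f : ι → R) (hf : ∀ i ∈ s, f i ∈ I) : 1 - ∏ i ∈ s, (1 - f i) ∈ I := by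
  classical
  induction s using Finset.induction with
  | empty => simpa using I.zero_mem
  | @insert j s hj ih =>
    rw [Finset.prod_insert hj]
    have h1 : 1 - ∏ i ∈ s, (1 - f i) ∈ I := ih fun i hi => hf i (Finset.mem_insert_of_mem hi)
    have h2 : f j ∈ I := hf j (Finset.mem_insert_self j s)
    have : 1 - (1 - f j) * ∏ i ∈ s, (1 - f i)
        = (1 - ∏ i ∈ s, (1 - f i)) + f j * ∏ i ∈ s, (1 - f i) := by ring
    rw [this]
    exact I.add_mem h1 (I.mul_mem_right _ h2)


/-- Weak Boolean Nullstellensatz: for a finitely generated ideal `I` of the Boolean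
polynomial ring `𝔽₂[X₁,…,Xₙ]/⟨Xᵢ² − Xᵢ⟩`, the variety
`V(I) = {x ∈ 𝔽₂ⁿ : f(x) = 0 for all f ∈ I}` is empty iff `1 ∈ I`.
A class `f` vanishes at `x` precisely when (any, hence every) representative of `f`
evaluates to `0` at `x`; this is expressed via the comap of `I` along the
quotient map. -/
theorem weak_boolean_nullstellensatz (n : ℕ)
    (I : Ideal (MvPolynomial (Fin n) (ZMod 2) ⧸
      Ideal.span (Set.range fun i : Fin n => (X i : MvPolynomial (Fin n) (ZMod 2)) ^ 2 - X i)))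
    (hFG : I.FG) :
    (∀ x : Fin n → ZMod 2,
      ∃ p ∈ I.comap (Ideal.Quotient.mk
        (Ideal.span (Set.range fun i : Fin n =>
          (X i : MvPolynomial (Fin n) (ZMod 2)) ^ 2 - X i))),
        eval x p ≠ 0) ↔ (1 : MvPolynomial (Fin n) (ZMod 2) ⧸
      Ideal.span (Set.range fun i : Fin n =>
        (X i : MvPolynomial (Fin n) (ZMod 2)) ^ 2 - X i)) ∈ I := by
  set mk := Ideal.Quotient.mk
    (Ideal.span (Set.range fun i : Fin n =>
      (X i : MvPolynomial (Fin n) (ZMod 2)) ^ 2 - X i)) with hmk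
  constructor
  · intro h
    choose p hpI hpx using h
    set g : MvPolynomial (Fin n) (ZMod 2) := ∏ x : Fin n → ZMod 2, (1 - p x) with hg
    have hgJ : mk g = 0 := by
      rw [Ideal.Quotient.eq_zero_iff_mem]
      apply bool_mem_of_eval_zero
      intro y
      rw [hg, map_prod]
      apply Finset.prod_eq_zero (Finset.mem_univ y)
      rw [map_sub, map_one, zmod2_eq_one _ (hpx y), sub_self]
    have key : (1 : _) - ∏ x : Fin n → ZMod 2, (1 - mk (p x)) ∈ I :=
      one_sub_prod_mem I Finset.univ (fun x => mk (p x)) fun x _ => hpI x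
    have : ∏ x : Fin n → ZMod 2, (1 - mk (p x)) = mk g := by
      rw [hg, map_prod]
      exact Finset.prod_congr rfl fun x _ => by rw [map_sub, map_one]
    rwa [this, hgJ, sub_zero] at key
  · intro h1 x
    exact ⟨1, by simpa [Ideal.mem_comap, map_one] using h1, by simp⟩
end

section
/- Let M be a set of points in 𝔽₂ⁿ with indicator polynomials g₁,…,g_m, and let I be the ideal of the Boolean polynomial ring generated by g = 1 + g₁ + ⋯ + g_m. Then a Boolean polynomial f lies in I if and only if f vanishes at every point of M. -/
open MvPolynomial

/-- The indicator polynomial `χ_a(X) = ∏ᵢ (Xᵢ + aᵢ + 1)` of a point `a ∈ 𝔽₂ⁿ`. -/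
noncomputable def indicatorPoly (n : ℕ) (a : Fin n → ZMod 2) :
    MvPolynomial (Fin n) (ZMod 2) :=
  ∏ i : Fin n, (X i + C (a i) + 1)

/-- The field ideal `⟨Xᵢ² − Xᵢ : i⟩` of the Boolean polynomial ring. -/
noncomputable def fieldIdeal (n : ℕ) : Ideal (MvPolynomial (Fin n) (ZMod 2)) :=
  Ideal.span (Set.range fun i : Fin n => (X i : MvPolynomial (Fin n) (ZMod 2)) ^ 2 - X i)

lemma eval_fieldIdeal {n : ℕ} {p : MvPolynomial (Fin n) (ZMod 2)}
    (hp : p ∈ fieldIdeal n) (x : Fin n → ZMod 2) : eval x p = 0 := by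
  have h : fieldIdeal n ≤ RingHom.ker (eval x) := by
    rw [fieldIdeal, Ideal.span_le]
    rintro _ ⟨i, rfl⟩
    have hb : ∀ b : ZMod 2, b ^ 2 - b = 0 := by decide
    simp [RingHom.mem_ker, hb]
  exact h hp

lemma eval_indicator {n : ℕ} (b c : Fin n → ZMod 2) :
    eval b (indicatorPoly n c) = if b = c then 1 else 0 := by
  unfold indicatorPoly
  rw [map_prod]
  simp only [map_add, eval_X, eval_C, map_one]
  by_cases h : b = c
  · subst h
    rw [if_pos rfl]
    apply Finset.prod_eq_one
    intro i _
    have : ∀ t : ZMod 2, t + t + 1 = 1 := by decide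
    exact this _
  · rw [if_neg h]
    obtain ⟨i, hi⟩ : ∃ i, b i ≠ c i := by
      by_contra hc; push_neg at hc; exact h (funext hc)
    apply Finset.prod_eq_zero (Finset.mem_univ i)
    have : ∀ s t : ZMod 2, s ≠ t → s + t + 1 = 0 := by decide
    exact this _ _ hi

lemma two_eq_zero' {n : ℕ} : (2 : MvPolynomial (Fin n) (ZMod 2)) = 0 := by
  have h : ((2 : ℕ) : MvPolynomial (Fin n) (ZMod 2)) = 0 := CharP.cast_eq_zero _ 2
  exact_mod_cast h

lemma indicator_mul_factor {n : ℕ} (x : Fin n → ZMod 2) (i : Fin n) :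
    indicatorPoly n x * (X i + C (x i)) ∈ fieldIdeal n := by
  have hsq : (C (x i) : MvPolynomial (Fin n) (ZMod 2)) ^ 2 = C (x i) := by
    rw [← map_pow]
    have ht : ∀ t : ZMod 2, t ^ 2 = t := by decide
    rw [ht]
  have hkey : (X i + C (x i) + 1) * (X i + C (x i))
      = (X i : MvPolynomial (Fin n) (ZMod 2)) ^ 2 - X i := by
    linear_combination (C (x i) * X i + X i + C (x i)) * two_eq_zero' + hsq
  unfold indicatorPoly
  rw [← Finset.mul_prod_erase _ _ (Finset.mem_univ i)]
  have heq : (X i + C (x i) + 1) * (∏ j ∈ Finset.univ.erase i, (X j + C (x j) + 1))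
        * (X i + C (x i))
      = ((X i : MvPolynomial (Fin n) (ZMod 2)) ^ 2 - X i)
        * ∏ j ∈ Finset.univ.erase i, (X j + C (x j) + 1) := by
    rw [← hkey]; ring
  rw [heq]
  exact Ideal.mul_mem_right _ _ (Ideal.subset_span ⟨i, rfl⟩)

lemma mk_X_mul_indicator {n : ℕ} (x : Fin n → ZMod 2) (i : Fin n) :
    Ideal.Quotient.mk (fieldIdeal n) (X i * indicatorPoly n x)
      = Ideal.Quotient.mk (fieldIdeal n) (C (x i) * indicatorPoly n x) := by
  rw [Ideal.Quotient.eq]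
  have heq : X i * indicatorPoly n x - C (x i) * indicatorPoly n x
      = indicatorPoly n x * (X i + C (x i)) := by
    linear_combination (-(C (x i) * indicatorPoly n x)) * two_eq_zero'
  rw [heq]
  exact indicator_mul_factor x i

lemma mk_mul_indicator {n : ℕ} (p : MvPolynomial (Fin n) (ZMod 2)) (x : Fin n → ZMod 2) :
    Ideal.Quotient.mk (fieldIdeal n) (p * indicatorPoly n x)
      = Ideal.Quotient.mk (fieldIdeal n) (C (eval x p) * indicatorPoly n x) := by
  induction p using MvPolynomial.induction_on with
  | C a => simp
  | add p q hp hq =>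
      rw [add_mul, map_add, hp, hq, map_add, map_add, ← map_add, ← map_add, ← add_mul, ← map_add]
  | mul_X p i hp =>
      have : Ideal.Quotient.mk (fieldIdeal n) (p * X i * indicatorPoly n x)
          = Ideal.Quotient.mk (fieldIdeal n) p *
            Ideal.Quotient.mk (fieldIdeal n) (X i * indicatorPoly n x) := by
        rw [← map_mul]; ring_nf
      rw [this, mk_X_mul_indicator, ← map_mul]
      have h1 : p * (C (x i) * indicatorPoly n x) = C (x i) * (p * indicatorPoly n x) := by ring
      rw [h1, map_mul, hp, ← map_mul]
      congr 1
      rw [map_mul, eval_X, map_mul]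
      ring

/-- Let `M = {a₁,…,a_m} ⊆ 𝔽₂ⁿ` with indicator polynomials `g₁,…,g_m`, and let `I`
be the ideal of the Boolean polynomial ring `𝔽₂[X]/⟨Xᵢ²−Xᵢ⟩` generated by
`g = 1 + g₁ + ⋯ + g_m`. Then a Boolean polynomial lies in `I` iff it vanishes at
every point of `M` (vanishing is checked on any representative, which is
well-defined modulo the field ideal). -/
theorem aclus_ideal_membership (n m : ℕ) (a : Fin m → (Fin n → ZMod 2))
    (ha : Function.Injective a)
    (I : Ideal (MvPolynomial (Fin n) (ZMod 2) ⧸ fieldIdeal n))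
    (hI : I = Ideal.span {Ideal.Quotient.mk (fieldIdeal n)
      (1 + ∑ i : Fin m, indicatorPoly n (a i))}) :
    ∀ p : MvPolynomial (Fin n) (ZMod 2),
      Ideal.Quotient.mk (fieldIdeal n) p ∈ I ↔ ∀ i : Fin m, eval (a i) p = 0 := by
  intro p
  set g : MvPolynomial (Fin n) (ZMod 2) := 1 + ∑ i : Fin m, indicatorPoly n (a i) with hg
  have hevalg : ∀ i : Fin m, eval (a i) g = 0 := by
    intro i
    rw [hg, map_add, map_one, map_sum]
    have : ∀ j : Fin m, eval (a i) (indicatorPoly n (a j)) = if i = j then 1 else 0 := by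
      intro j
      rw [eval_indicator]
      by_cases h : i = j
      · subst h; simp
      · rw [if_neg h, if_neg (fun hc => h (ha hc))]
    simp only [this]
    rw [Finset.sum_ite_eq (Finset.univ : Finset (Fin m)) i (fun _ => (1 : ZMod 2))]
    simp
    decide
  constructor
  · intro hp i
    rw [hI] at hp
    obtain ⟨q, hq⟩ := Ideal.mem_span_singleton'.1 hp
    obtain ⟨q', rfl⟩ := Ideal.Quotient.mk_surjective q
    rw [← map_mul, Ideal.Quotient.mk_eq_mk_iff_sub_mem] at hq
    have := eval_fieldIdeal hq (a i)
    rw [map_sub, map_mul, hevalg i, mul_zero, zero_sub, neg_eq_zero] at this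
    exact this
  · intro hev
    rw [hI]
    apply Ideal.mem_span_singleton'.2
    refine ⟨Ideal.Quotient.mk (fieldIdeal n) p, ?_⟩
    rw [← map_mul, hg, mul_add, mul_one, Finset.mul_sum, map_add, map_sum]
    have : ∀ j ∈ (Finset.univ : Finset (Fin m)),
        Ideal.Quotient.mk (fieldIdeal n) (p * indicatorPoly n (a j)) = 0 := by
      intro j _
      rw [mk_mul_indicator, hev j, map_zero, zero_mul, map_zero]
    rw [Finset.sum_congr rfl this]
    simp
end
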